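/- Let Γ be a finite connected graph with vertex set V, a nonempty subset D ⊆ V of 'boundary' vertices, and let G be a group. Two G-colorings c, c' of Γ have the same holonomy along every edge path with both endpoints in D if and only if they differ by a gauge transformation λ : V → G with λ(v) = e for all v ∈ D. -/

import Mathlib

/-- A graph presented by its set of *oriented* edges: each oriented edge has a source
vertex, and there is an orientation-reversal involution; the target of `e` is the source
of the reversed edge. -/
structure OrientedGraph (V E : Type*) where
  s : E → V
  rev : E → E
  rev_rev : ∀ e, rev (rev e) = e

namespace OrientedGraph

variable {V E : Type*} {G : Type*} [Group G]

/-- The target of an oriented edge. -/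
def t (Γ : OrientedGraph V E) (e : E) : V := Γ.s (Γ.rev e)

/-- A `G`-coloring of the graph: a function on oriented edges inverting under
orientation reversal. -/
def IsColoring (Γ : OrientedGraph V E) (c : E → G) : Prop :=
  ∀ e, c (Γ.rev e) = (c e)⁻¹

/-- The action of a gauge transformation `lam : V → G` on colorings:
`(λ·c)(e) = λ(s(e)) · c(e) · λ(t(e))⁻¹`. -/
def gauge (Γ : OrientedGraph V E) (lam : V → G) (c : E → G) : E → G :=
  fun e => lam (Γ.s e) * c e * (lam (Γ.t e))⁻¹

end OrientedGraph

namespace OrientedGraph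

variable {V E : Type*} {G : Type*} [Group G]

/-- `IsWalk Γ l u v` : the list of oriented edges `l` forms an edge path from `u` to `v`. -/
def IsWalk (Γ : OrientedGraph V E) : List E → V → V → Prop
  | [], u, v => u = v
  | e :: l, u, v => Γ.s e = u ∧ IsWalk Γ l (Γ.t e) v

/-- The holonomy of a coloring along an edge path: the ordered product of the colors. -/
def holonomy (c : E → G) (l : List E) : G := (l.map c).prod

/-- The graph is connected: any two vertices are joined by an edge path. -/
def Connected (Γ : OrientedGraph V E) : Prop := ∀ u v : V, ∃ l, Γ.IsWalk l u v

end OrientedGraph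

/-!
Fix a boundary vertex `v₀` and, for each vertex `x`, a walk `p x` from `v₀` to `x`. The gauge
transformation is `λ x = (hol c' (p x))⁻¹ * hol c (p x)`. Closing walks from `v₀` to `x` by a
fixed walk back to `v₀` shows that this ratio does not depend on the chosen walk; applied to
`p (s e)` followed by `e`, this is exactly the gauge relation at the edge `e`. Conversely, the
holonomy of a gauge-transformed coloring along a walk from `u` to `v` is `λ u * hol c * (λ v)⁻¹`.
-/

theorem inv_mul_eq_inv_mul_of_mul_eq_mul {G : Type*} [Group G] {a a' b b' m m' : G}
    (h₁ : a * b = a' * b') (h₂ : m * b = m' * b') : a'⁻¹ * a = m'⁻¹ * m := by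
  have h₁' : a⁻¹ * a' = b * b'⁻¹ := by
    rw [inv_mul_eq_iff_eq_mul, ← mul_assoc, eq_mul_inv_iff_mul_eq, h₁]
  have h₂' : m⁻¹ * m' = b * b'⁻¹ := by
    rw [inv_mul_eq_iff_eq_mul, ← mul_assoc, eq_mul_inv_iff_mul_eq, h₂]
  simpa using congrArg (·⁻¹) (h₁'.trans h₂'.symm)

namespace OrientedGraph

variable {V E G : Type*} [Group G] {Γ : OrientedGraph V E}

theorem isWalk_singleton (e : E) : Γ.IsWalk [e] (Γ.s e) (Γ.t e) := ⟨rfl, rfl⟩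

theorem IsWalk.append {l₁ l₂ : List E} {u v w : V} (h₁ : Γ.IsWalk l₁ u v)
    (h₂ : Γ.IsWalk l₂ v w) : Γ.IsWalk (l₁ ++ l₂) u w := by
  induction l₁ generalizing u with
  | nil => cases h₁; exact h₂
  | cons e l ih => exact ⟨h₁.1, ih h₁.2⟩

@[simp]
theorem holonomy_nil (c : E → G) : holonomy c [] = 1 := rfl

@[simp]
theorem holonomy_cons (c : E → G) (e : E) (l : List E) :
    holonomy c (e :: l) = c e * holonomy c l := List.prod_cons

@[simp]
theorem holonomy_append (c : E → G) (l₁ l₂ : List E) :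
    holonomy c (l₁ ++ l₂) = holonomy c l₁ * holonomy c l₂ := by
  simp [holonomy]

theorem IsWalk.holonomy_gauge {l : List E} {u v : V} (h : Γ.IsWalk l u v) (lam : V → G)
    (c : E → G) : holonomy (Γ.gauge lam c) l = lam u * holonomy c l * (lam v)⁻¹ := by
  induction l generalizing u with
  | nil => cases h; simp
  | cons e l ih =>
    obtain ⟨rfl, hl⟩ := h
    rw [holonomy_cons, holonomy_cons, ih hl, gauge]
    group

theorem holonomy_ratio_eq {c c' : E → G} {v₀ x : V}
    (h : ∀ l, Γ.IsWalk l v₀ v₀ → holonomy c l = holonomy c' l) {q : List E}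
    (hq : Γ.IsWalk q x v₀) {l m : List E} (hl : Γ.IsWalk l v₀ x) (hm : Γ.IsWalk m v₀ x) :
    (holonomy c' l)⁻¹ * holonomy c l = (holonomy c' m)⁻¹ * holonomy c m := by
  have hlq := h _ (hl.append hq)
  have hmq := h _ (hm.append hq)
  rw [holonomy_append, holonomy_append] at hlq hmq
  exact inv_mul_eq_inv_mul_of_mul_eq_mul hlq hmq

theorem exists_gauge_eq_of_holonomy_loop_eq (hconn : Γ.Connected) {c c' : E → G} {v₀ : V}
    (h : ∀ l, Γ.IsWalk l v₀ v₀ → holonomy c l = holonomy c' l) :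
    ∃ lam : V → G, lam v₀ = 1 ∧ Γ.gauge lam c = c' := by
  choose p hp using hconn v₀
  choose q hq using fun x => hconn x v₀
  have ratio {l : List E} {x : V} (hl : Γ.IsWalk l v₀ x) :
      (holonomy c' l)⁻¹ * holonomy c l = (holonomy c' (p x))⁻¹ * holonomy c (p x) :=
    holonomy_ratio_eq h (hq x) hl (hp x)
  refine ⟨fun x => (holonomy c' (p x))⁻¹ * holonomy c (p x), ?_, ?_⟩
  · simpa using (ratio (l := []) rfl).symm
  · funext e
    have hedge := ratio ((hp (Γ.s e)).append (isWalk_singleton e))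
    simp only [holonomy_append, holonomy_cons, holonomy_nil, mul_one] at hedge
    rw [gauge, ← hedge]
    group

end OrientedGraph

open OrientedGraph

theorem same_holonomy_iff_gauge_general {V E G : Type*} [Group G]
    (Γ : OrientedGraph V E) (D : Set V) (hD : D.Nonempty) (hconn : Γ.Connected)
    (c c' : E → G) :
    (∀ (l : List E) (u v : V), u ∈ D → v ∈ D → Γ.IsWalk l u v →
        holonomy c l = holonomy c' l) ↔
    (∃ lam : V → G, (∀ v ∈ D, lam v = 1) ∧ Γ.gauge lam c = c') := by
  constructor
  · intro h
    obtain ⟨v₀, hv₀⟩ := hD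
    obtain ⟨lam, hlam₀, rfl⟩ :=
      exists_gauge_eq_of_holonomy_loop_eq hconn fun l => h l v₀ v₀ hv₀ hv₀
    refine ⟨lam, fun v hv => ?_, rfl⟩
    obtain ⟨l, hl⟩ := hconn v₀ v
    have hhol := h l v₀ v hv₀ hv hl
    rw [hl.holonomy_gauge, hlam₀, one_mul, left_eq_mul, inv_eq_one] at hhol
    exact hhol
  · rintro ⟨lam, hlam, rfl⟩ l u v hu hv hl
    rw [hl.holonomy_gauge, hlam u hu, hlam v hv, one_mul, inv_one, mul_one]

/-- Two `G`-colorings of a finite connected graph have the same holonomy along every edge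
path with both endpoints in the boundary set `D` if and only if they differ by a gauge
transformation which is trivial on `D`. -/
theorem same_holonomy_iff_gauge {V E G : Type*} [Fintype V] [Fintype E] [Group G]
    (Γ : OrientedGraph V E) (D : Set V) (hD : D.Nonempty) (hconn : Γ.Connected)
    (c c' : E → G) (hc : Γ.IsColoring c) (hc' : Γ.IsColoring c') :
    (∀ (l : List E) (u v : V), u ∈ D → v ∈ D → Γ.IsWalk l u v →
        holonomy c l = holonomy c' l) ↔
    (∃ lam : V → G, (∀ v ∈ D, lam v = 1) ∧ Γ.gauge lam c = c') :=
  same_holonomy_iff_gauge_general Γ D hD hconn c c'
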